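/- Let p be a prime, C a finite type, I a finite subset of C with |I| ≥ 1, ι a finite type with |I| + 2 ≤ |ι|, and x : ι → F_p injective. For each u ∈ C let m(u), q(u) ∈ F_p; for each i ∈ ι and u ∈ C let w(i, u) ∈ F_p with w(i, u) ≠ 0 and zb(i, u) ∈ F_p, and define the outsourced puzzle coordinates o(i, u) := w(i, u)·((x(i) + m(u)) + zb(i, u)). For each leader l ∈ I let root(l) ∈ F_p, and for each i ∈ ι let w'(i, l) ∈ F_p with w'(i, l) ≠ 0 and z'(i, l) ∈ F_p. Let a : C → C → F_p and define y(u) := (if u ∈ I then −∑_{l ∈ univ \ {u}} a(u, l) else 0) + ∑_{l ∈ I \ {u}} a(l, u). Set P(i) := ∏_{l ∈ I} (x(i) − root(l))·w'(i, l), d(i, u) := (q(u)·P(i)·w(i, u)⁻¹)·o(i, u) + (−(q(u)·P(i)·zb(i, u)) + (if u ∈ I then z'(i, u) else 0) + y(u)), and g(i) := ∑_{u ∈ C} d(i, u). Then the Lagrange interpolant through the points (x(i), (∏_{l ∈ I} w'(i, l))⁻¹·(g(i) − ∑_{l ∈ I} z'(i, l))) equals Θ(X) := (∏_{l ∈ I}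 (X − C(root(l)))) · (∑_{u ∈ C} C(q(u))·(X + C(m(u)))); and if moreover root(l) ≠ 0 for every l ∈ I, then (coeff 0 of Θ) · (∏_{l ∈ I} (−root(l)))⁻¹ = ∑_{u ∈ C} q(u)·m(u). -/

import Mathlib

/-!
The masks `y u` cancel in the aggregate, the clients' blinding `w, zb` cancels inside each
OLE⁺ output, and the leaders' temporary blinding `w', z'` is removed by the server, so the
unblinded value at `x i` is `Θ (x i)`. Since `deg Θ ≤ |I| + 1 < |ι|`, interpolation recovers
`Θ`, and its constant term is `∏ (-root l) · ∑ q u m u`.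
-/

open Polynomial Finset

section ZeroSumMask

variable {C M : Type*} [Fintype C] [DecidableEq C] [AddCommGroup M]

def zeroSumMask (I : Finset C) (a : C → C → M) (u : C) : M :=
  (if u ∈ I then -∑ l ∈ univ \ {u}, a u l else 0) + ∑ l ∈ I \ {u}, a l u

-- Each `a l u` sent by a leader `l` is subtracted by `l` and added by its recipient `u`.
theorem sum_zeroSumMask (I : Finset C) (a : C → C → M) : ∑ u, zeroSumMask I a u = 0 := by
  have hswap : ∑ u, ∑ l ∈ I \ {u}, a l u = ∑ l ∈ I, ∑ u ∈ univ \ {l}, a l u :=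
    sum_comm' fun u l => by simp only [mem_sdiff, mem_univ, mem_singleton, true_and]; tauto
  simp only [zeroSumMask, sum_add_distrib, hswap, sum_ite_mem, univ_inter, sum_neg_distrib,
    neg_add_cancel]

end ZeroSumMask

section Aggregation

variable {F C : Type*} [Field F] [Fintype C] [DecidableEq C]

theorem ole_unblind {w : F} (hw : w ≠ 0) (c t zb r : F) :
    c * w⁻¹ * (w * (t + zb)) + (-(c * zb) + r) = c * t + r := by
  field_simp
  ring

theorem sum_ole_outputs (I : Finset C) {w : C → F} (hw : ∀ u, w u ≠ 0)
    (c : F) (q t zb z y : C → F) (hy : ∑ u, y u = 0) :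
    ∑ u, (q u * c * (w u)⁻¹ * (w u * (t u + zb u)) +
        (-(q u * c * zb u) + (if u ∈ I then z u else 0) + y u)) =
      c * ∑ u, q u * t u + ∑ l ∈ I, z l := by
  simp only [add_assoc, ole_unblind (hw _), sum_add_distrib, hy, add_zero, sum_ite_mem,
    univ_inter, mul_sum]
  exact congrArg₂ _ (sum_congr rfl fun u _ => by ring) rfl

end Aggregation

section PolynomialBounds

variable {R C : Type*} [CommRing R]

theorem sum_C_mul_X_add_C [Fintype C] (q m : C → R) :
    ∑ u, Polynomial.C (q u) * (X + Polynomial.C (m u)) =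
      Polynomial.C (∑ u, q u) * X + Polynomial.C (∑ u, q u * m u) := by
  simp only [mul_add, sum_add_distrib, ← sum_mul, map_sum, C_mul]

theorem natDegree_prod_X_sub_C_mul_linear_le (I : Finset C) (r : C → R) (a b : R) :
    ((∏ l ∈ I, (X - Polynomial.C (r l))) * (Polynomial.C a * X + Polynomial.C b)).natDegree ≤
      I.card + 1 := by
  refine natDegree_mul_le.trans (add_le_add ?_ natDegree_linear_le)
  refine (natDegree_prod_le _ _).trans ?_
  simpa using sum_le_sum fun l (_ : l ∈ I) => natDegree_X_sub_C_le (r l)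

theorem coeff_zero_prod_X_sub_C_mul (I : Finset C) (r : C → R) (f : R[X]) :
    ((∏ l ∈ I, (X - Polynomial.C (r l))) * f).coeff 0 = (∏ l ∈ I, -r l) * f.coeff 0 := by
  simp [coeff_zero_eq_eval_zero, eval_prod]

end PolynomialBounds

theorem stmt_16_general {p : ℕ} [Fact p.Prime] {C : Type} [Fintype C] [DecidableEq C]
    (I : Finset C)
    {ι : Type} [Fintype ι] [DecidableEq ι] (hcard : I.card + 2 ≤ Fintype.card ι)
    (x : ι → ZMod p) (hx : Function.Injective x)
    (m q : C → ZMod p)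
    (w : ι → C → ZMod p) (hw : ∀ i u, w i u ≠ 0) (zb : ι → C → ZMod p)
    (root : C → ZMod p)
    (w' : ι → C → ZMod p) (hw' : ∀ i l, w' i l ≠ 0) (z' : ι → C → ZMod p)
    (a : C → C → ZMod p)
    (y : C → ZMod p)
    (hy : ∀ u, y u = (if u ∈ I then -∑ l ∈ Finset.univ \ {u}, a u l else 0) +
      ∑ l ∈ I \ {u}, a l u)
    (o : ι → C → ZMod p) (ho : ∀ i u, o i u = w i u * ((x i + m u) + zb i u))
    (P : ι → ZMod p) (hP : ∀ i, P i = ∏ l ∈ I, (x i - root l) * w' i l)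
    (d : ι → C → ZMod p)
    (hd : ∀ i u, d i u = (q u * P i * (w i u)⁻¹) * o i u +
      (-(q u * P i * zb i u) + (if u ∈ I then z' i u else 0) + y u))
    (g : ι → ZMod p) (hg : ∀ i, g i = ∑ u, d i u)
    (Θ : (ZMod p)[X])
    (hΘ : Θ = (∏ l ∈ I, (X - Polynomial.C (root l))) *
      ∑ u, Polynomial.C (q u) * (X + Polynomial.C (m u))) :
    Lagrange.interpolate Finset.univ x
        (fun i => (∏ l ∈ I, w' i l)⁻¹ * (g i - ∑ l ∈ I, z' i l)) = Θ ∧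
    ((∀ l ∈ I, root l ≠ 0) →
      Θ.coeff 0 * (∏ l ∈ I, -root l)⁻¹ = ∑ u, q u * m u) := by
  have hmask : ∑ u, y u = 0 := by
    rw [show y = zeroSumMask I a from funext hy]
    exact sum_zeroSumMask I a
  have hval : ∀ i, (∏ l ∈ I, w' i l)⁻¹ * (g i - ∑ l ∈ I, z' i l) = Θ.eval (x i) := by
    intro i
    have hw'i : ∏ l ∈ I, w' i l ≠ 0 := prod_ne_zero_iff.2 fun l _ => hw' i l
    simp only [hg, hd, ho]
    rw [sum_ole_outputs I (hw i) _ _ _ _ _ _ hmask, add_sub_cancel_right, hP, prod_mul_distrib, hΘ]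
    simp only [eval_mul, eval_prod, eval_sub, eval_X, eval_C, eval_finsetSum, eval_add]
    field_simp
  rw [sum_C_mul_X_add_C] at hΘ
  have hdeg : Θ.degree < (univ : Finset ι).card := by
    refine (degree_le_natDegree).trans_lt ?_
    rw [card_univ, hΘ]
    exact_mod_cast (natDegree_prod_X_sub_C_mul_linear_le I root _ _).trans_lt (by omega)
  refine ⟨(Lagrange.eq_interpolate_of_eval_eq _ hx.injOn hdeg fun i _ => (hval i).symm).symm,
    fun hroot => ?_⟩
  have hne : ∏ l ∈ I, -root l ≠ 0 := prod_ne_zero_iff.2 fun l hl => neg_ne_zero.2 (hroot l hl)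
  rw [hΘ, coeff_zero_prod_X_sub_C_mul, mul_comm, coeff_add, coeff_C_mul_X, coeff_C_zero,
    if_neg zero_ne_one, zero_add, inv_mul_cancel_left₀ hne]

theorem stmt_16 {p : ℕ} [Fact p.Prime] {C : Type} [Fintype C] [DecidableEq C]
    (I : Finset C) (hI : 1 ≤ I.card)
    {ι : Type} [Fintype ι] [DecidableEq ι] (hcard : I.card + 2 ≤ Fintype.card ι)
    (x : ι → ZMod p) (hx : Function.Injective x)
    (m q : C → ZMod p)
    (w : ι → C → ZMod p) (hw : ∀ i u, w i u ≠ 0) (zb : ι → C → ZMod p)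
    (root : C → ZMod p)
    (w' : ι → C → ZMod p) (hw' : ∀ i l, w' i l ≠ 0) (z' : ι → C → ZMod p)
    (a : C → C → ZMod p)
    (y : C → ZMod p)
    (hy : ∀ u, y u = (if u ∈ I then -∑ l ∈ Finset.univ \ {u}, a u l else 0) +
      ∑ l ∈ I \ {u}, a l u)
    (o : ι → C → ZMod p) (ho : ∀ i u, o i u = w i u * ((x i + m u) + zb i u))
    (P : ι → ZMod p) (hP : ∀ i, P i = ∏ l ∈ I, (x i - root l) * w' i l)
    (d : ι → C → ZMod p)
    (hd : ∀ i u, d i u = (q u * P i * (w i u)⁻¹) * o i u +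
      (-(q u * P i * zb i u) + (if u ∈ I then z' i u else 0) + y u))
    (g : ι → ZMod p) (hg : ∀ i, g i = ∑ u, d i u)
    (Θ : (ZMod p)[X])
    (hΘ : Θ = (∏ l ∈ I, (X - Polynomial.C (root l))) *
      ∑ u, Polynomial.C (q u) * (X + Polynomial.C (m u))) :
    Lagrange.interpolate Finset.univ x
        (fun i => (∏ l ∈ I, w' i l)⁻¹ * (g i - ∑ l ∈ I, z' i l)) = Θ ∧
    ((∀ l ∈ I, root l ≠ 0) →
      Θ.coeff 0 * (∏ l ∈ I, -root l)⁻¹ = ∑ u, q u * m u) :=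
  stmt_16_general I hcard x hx m q w hw zb root w' hw' z' a y hy o ho P hP d hd g hg Θ hΘ
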